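/- arXiv:math/0508362 — 3 statements merged into one kernel-verified Lean document; each statement's English description precedes it below -/
import Mathlib

section
/- The bivariate generating function identity ∑_{π ∈ S_n} q^{inv(π)} t^{maj(π⁻¹)} = ∑_{π ∈ S_n} q^{maj(π)} t^{maj(π⁻¹)} holds for every positive integer n. -/
/-!
For a set `S` of positions, replace every value of a permutation by the index of its block,
the blocks being the runs of consecutive values cut at `S`. On the class `Des(π⁻¹) ⊆ S` this
is a bijection onto the rearrangements of a fixed weakly increasing word, and it preserves `inv`
and `maj`: inside a block the values of such a `π` occur in increasing order. Foata's second
fundamental transformation permutes the rearrangements of any word and carries `maj` to `inv`,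
so `inv` and `maj` are equidistributed on each class `Des(π⁻¹) ⊆ S`, hence, by
inclusion-exclusion over `S`, on each class `Des(π⁻¹) = S`, on which `maj(π⁻¹) = ∑ S`.
-/

open Finset

noncomputable section

/-- The `q`-analogue `[m]_q = 1 + q + ... + q^(m-1)`. -/
def qInt {F : Type} [Field F] (q : F) (m : ℕ) : F := ∑ i ∈ Finset.range m, q ^ i

/-- The `q`-factorial `[m]_q! = [1]_q [2]_q ⋯ [m]_q`. -/
def qFact {F : Type} [Field F] (q : F) (m : ℕ) : F := ∏ i ∈ Finset.range m, qInt q (i + 1)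

/-- Number of inversions of the word `w 0, w 1, ..., w (N-1)`. -/
def wInv (N : ℕ) (w : ℕ → ℤ) : ℕ :=
  ((Finset.range N ×ˢ Finset.range N).filter fun p => p.1 < p.2 ∧ w p.2 < w p.1).card

/-- Descent set (1-indexed) of the word `w 0, ..., w (N-1)`:
`i ∈ [N-1]` is a descent if the i-th letter exceeds the (i+1)-st letter. -/
def wDes (N : ℕ) (w : ℕ → ℤ) : Finset ℕ :=
  (Finset.Ico 1 N).filter fun i => w i < w (i - 1)

/-- Major index of a word: sum of its descents. -/
def wMaj (N : ℕ) (w : ℕ → ℤ) : ℕ := ∑ i ∈ wDes N w, i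

/-- Number of negative letters of a word. -/
def wNeg (N : ℕ) (w : ℕ → ℤ) : ℕ := ((Finset.range N).filter fun i => w i < 0).card

/-- The word `(π(1), ..., π(n))` of a permutation of `[n]`, with values in `[n] ⊆ ℤ`. -/
def sword (n : ℕ) (π : Equiv.Perm (Fin n)) (i : ℕ) : ℤ :=
  if h : i < n then ((π ⟨i, h⟩ : ℕ) : ℤ) + 1 else 0

def sInv (n : ℕ) (π : Equiv.Perm (Fin n)) : ℕ := wInv n (sword n π)
def sDes (n : ℕ) (π : Equiv.Perm (Fin n)) : Finset ℕ := wDes n (sword n π)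
def sMaj (n : ℕ) (π : Equiv.Perm (Fin n)) : ℕ := wMaj n (sword n π)
def sDesNum (n : ℕ) (π : Equiv.Perm (Fin n)) : ℕ := (sDes n π).card

/-- A signed permutation of `[n]`: a permutation `σ` of `ℤ` with `σ(-a) = -σ(a)`
which fixes every integer of absolute value greater than `n`. -/
def IsSigned (n : ℕ) (σ : Equiv.Perm ℤ) : Prop :=
  (∀ a : ℤ, σ (-a) = -σ a) ∧ ∀ a : ℤ, (n : ℤ) < |a| → σ a = a

abbrev SignedPerm (n : ℕ) := {σ : Equiv.Perm ℤ // IsSigned n σ}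

theorem IsSigned.map_zero {n : ℕ} {σ : Equiv.Perm ℤ} (h : IsSigned n σ) : σ 0 = 0 := by
  have h1 := h.1 0
  simp only [neg_zero] at h1
  omega

theorem IsSigned.abs_apply_le {n : ℕ} {σ : Equiv.Perm ℤ} (h : IsSigned n σ) {a : ℤ}
    (ha : |a| ≤ n) : |σ a| ≤ n := by
  by_contra hc
  push_neg at hc
  have h2 : σ (σ a) = σ a := h.2 (σ a) hc
  have h3 : σ a = a := σ.injective h2
  rw [h3] at hc
  omega

theorem IsSigned.ext {n : ℕ} {σ τ : Equiv.Perm ℤ} (hσ : IsSigned n σ) (hτ : IsSigned n τ)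
    (h : ∀ a : ℤ, 1 ≤ a → a ≤ n → σ a = τ a) : σ = τ := by
  apply Equiv.ext
  intro a
  rcases lt_trichotomy a 0 with h1 | h1 | h1
  · by_cases h2 : -(n : ℤ) ≤ a
    · have key := h (-a) (by omega) (by omega)
      have e1 := hσ.1 (-a)
      have e2 := hτ.1 (-a)
      rw [neg_neg] at e1 e2
      rw [e1, e2, key]
    · have habs : (n : ℤ) < |a| := by rw [abs_of_neg h1]; omega
      rw [hσ.2 a habs, hτ.2 a habs]
  · rw [h1, hσ.map_zero, hτ.map_zero]
  · by_cases h2 : a ≤ n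
    · exact h a (by omega) h2
    · have habs : (n : ℤ) < |a| := by rw [abs_of_pos h1]; omega
      rw [hσ.2 a habs, hτ.2 a habs]

noncomputable instance (n : ℕ) : Fintype (SignedPerm n) := by
  have key : ∀ (σ : SignedPerm n) (i : Fin n),
      σ.1 ((i : ℕ) + 1 : ℤ) ∈ Finset.Icc (-(n : ℤ)) (n : ℤ) := by
    intro σ i
    have hi : |((i : ℕ) + 1 : ℤ)| ≤ n := by
      have := i.2
      rw [abs_of_pos (by omega)]
      omega
    have hb := abs_le.mp (σ.2.abs_apply_le hi)
    rw [Finset.mem_Icc]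
    exact hb
  exact Fintype.ofInjective
    (fun σ : SignedPerm n =>
      (fun i : Fin n => (⟨σ.1 ((i : ℕ) + 1 : ℤ), key σ i⟩ :
        {x : ℤ // x ∈ Finset.Icc (-(n : ℤ)) (n : ℤ)})))
    (by
      intro σ τ hfun
      apply Subtype.ext
      apply IsSigned.ext σ.2 τ.2
      intro a ha1 ha2
      have hfin : (a - 1).toNat < n := by omega
      have h2 := congrFun hfun ⟨(a - 1).toNat, hfin⟩
      rw [Subtype.ext_iff] at h2
      have h3 : (((a - 1).toNat : ℕ) : ℤ) + 1 = a := by omega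
      have h2' : σ.1 ((((a - 1).toNat : ℕ) : ℤ) + 1) = τ.1 ((((a - 1).toNat : ℕ) : ℤ) + 1) := h2
      rw [h3] at h2'
      exact h2')

/-- The word `(σ(1), ..., σ(n))` of a signed permutation. -/
def bword (n : ℕ) (σ : Equiv.Perm ℤ) (i : ℕ) : ℤ := σ ((i : ℤ) + 1)

/-- The type-B descent set `Des_B(σ) = {i ∈ [0, n-1] : σ(i) > σ(i+1)}`, with `σ(0) := 0`. -/
def DesB (n : ℕ) (σ : Equiv.Perm ℤ) : Finset ℕ :=
  (Finset.range n).filter fun i => σ ((i : ℤ) + 1) < (if i = 0 then 0 else σ (i : ℤ))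

def bNeg (n : ℕ) (σ : Equiv.Perm ℤ) : ℕ := wNeg n (bword n σ)
def bMaj (n : ℕ) (σ : Equiv.Perm ℤ) : ℕ := wMaj n (bword n σ)

/-- The flag major index `fmaj(σ) = 2 maj(σ(1),...,σ(n)) + neg(σ)`, where the major index is
taken with respect to the order `-n < ... < -1 < 1 < ... < n` (the usual order of `ℤ`). -/
def bFmaj (n : ℕ) (σ : Equiv.Perm ℤ) : ℕ := 2 * bMaj n σ + bNeg n σ

def bInv (n : ℕ) (σ : Equiv.Perm ℤ) : ℕ := wInv n (bword n σ)

/-- The Coxeter generator `s_i` of `B_n` as a permutation of `ℤ` (for `0 ≤ i ≤ n-1`). -/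
def bGen (i : ℕ) : Equiv.Perm ℤ :=
  if i = 0 then Equiv.swap 1 (-1)
  else Equiv.swap (i : ℤ) ((i : ℤ) + 1) * Equiv.swap (-(i : ℤ)) (-((i : ℤ) + 1))

/-- Length of `σ` with respect to a generating set `G`: the minimal length of a word
in the generators expressing `σ`. -/
def coxLen (G : Set (Equiv.Perm ℤ)) (σ : Equiv.Perm ℤ) : ℕ :=
  sInf {r | ∃ l : List (Equiv.Perm ℤ), l.length = r ∧ (∀ g ∈ l, g ∈ G) ∧ l.prod = σ}

def BGens (n : ℕ) : Set (Equiv.Perm ℤ) := {g | ∃ i < n, g = bGen i}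

/-- The Coxeter length on the hyperoctahedral group `B_n`. -/
def lenB (n : ℕ) (σ : Equiv.Perm ℤ) : ℕ := coxLen (BGens n) σ

/-- Coxeter generators of `D_n`: `s_0^D` maps `1 ↦ -2, 2 ↦ -1`, together with `s_1, ..., s_{n-1}`. -/
def DGens (n : ℕ) : Set (Equiv.Perm ℤ) :=
  {g | g = Equiv.swap 1 (-2) * Equiv.swap (-1) 2 ∨ ∃ i, 1 ≤ i ∧ i < n ∧ g = bGen i}

/-- The Coxeter length on the Weyl group `D_n`. -/
def lenD (n : ℕ) (σ : Equiv.Perm ℤ) : ℕ := coxLen (DGens n) σ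

/-- The flag major index of type `D`: `fmaj_D(σ) = fmaj(σ(1),...,σ(n-1),|σ(n)|)`. -/
def fmajD (n : ℕ) (σ : Equiv.Perm ℤ) : ℕ :=
  2 * wMaj n (fun i => if i = n - 1 then |σ ((i : ℤ) + 1)| else σ ((i : ℤ) + 1))
    + wNeg n (fun i => if i = n - 1 then |σ ((i : ℤ) + 1)| else σ ((i : ℤ) + 1))

/-- `S` is a shuffle of the pairwise disjoint sequences in `L`: each sequence of `L` appears in
`S` in its original order, and `S` is, as a set, the disjoint union of the sequences of `L`. -/
def IsShuffle {α : Type} (S : List α) (L : List (List α)) : Prop :=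
  (∀ l ∈ L, l.Sublist S) ∧ (∀ x, x ∈ S ↔ ∃ l ∈ L, x ∈ l) ∧
    S.length = (L.map List.length).sum

/-- The coefficient `α_i(M)` of Theorems 4.2 and 4.4, for `M = {m 1 < ... < m t}`,
`m 0 = 0`, `m (t+1) = n`. The three cases are mutually exclusive, so the sum of the
indicator terms agrees with the case-by-case definition. -/
def alphaB {F : Type} [Field F] (q : F) (t : ℕ) (m : ℕ → ℕ) (i : ℤ) : F :=
  (if 0 < m 1 ∧ i = (m 1 : ℤ) then q ^ ((m 1 : ℕ) : ℤ) - q ^ (-((m 1 : ℕ) : ℤ)) else 0)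
  + ∑ s ∈ Finset.Icc 1 t,
      ((if i = (m (s + 1) : ℤ) then q ^ (-((m s : ℕ) : ℤ)) - q ^ (-((m (s + 1) : ℕ) : ℤ)) else 0)
        + (if i = -((m s : ℤ) + 1) then q ^ ((m (s + 1) : ℕ) : ℤ) - q ^ ((m s : ℕ) : ℤ) else 0))

end

noncomputable section Statements

open Finset RatFunc

local notation "𝕢" => (RatFunc.X : RatFunc ℚ)

namespace List

variable {α : Type*}

section Cycle

variable {p : α → Bool}

/-- One pass of Foata's cycling: every factor `u ++ [a]` of `v` with `p` true on `u` and false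
at `a` becomes `a :: u`. The accumulator `acc` holds the part of the current factor read so far. -/
def foataCycle (p : α → Bool) : List α → List α → List α
  | acc, [] => acc
  | acc, a :: l => if p a then foataCycle p (acc ++ [a]) l else (a :: acc) ++ foataCycle p [] l

def foataUncycle (p : α → Bool) : List α → List α
  | [] => []
  | a :: l => l.takeWhile p ++ a :: foataUncycle p (l.dropWhile p)
termination_by l => l.length
decreasing_by exact Nat.lt_succ_of_le (dropWhile_sublist p).length_le

theorem foataCycle_perm (acc v : List α) : (foataCycle p acc v).Perm (acc ++ v) := by
  induction v generalizing acc with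
  | nil => simp [foataCycle]
  | cons a l ih =>
    rw [foataCycle]
    split_ifs
    · simpa using ih (acc ++ [a])
    · simpa using ((ih []).append_left (a :: acc)).trans perm_middle.symm

theorem eq_nil_of_forall_getLast? {acc : List α} (hacc : ∀ b ∈ acc, p b)
    (hlast : ∀ y ∈ acc.getLast?, p y = false) : acc = [] := by
  rcases acc.eq_nil_or_concat' with rfl | ⟨l, b, rfl⟩
  · rfl
  · simpa [hacc b (by simp)] using hlast b (by simp)

theorem forall_getLast?_of_cons {acc l : List α} {a : α}
    (hlast : ∀ y ∈ (acc ++ a :: l).getLast?, p y = false) :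
    ∀ y ∈ l.getLast?, p y = false := by
  intro y hy
  exact hlast y (by simp [getLast?_append, getLast?_cons, Option.mem_def.mp hy])

theorem forall_head?_foataCycle {acc : List α} (v : List α) (hacc : ∀ b ∈ acc, p b)
    (hlast : ∀ y ∈ (acc ++ v).getLast?, p y = false) :
    ∀ c ∈ (foataCycle p acc v).head?, p c = false := by
  induction v generalizing acc with
  | nil =>
    obtain rfl := eq_nil_of_forall_getLast? hacc (by simpa using hlast)
    simp [foataCycle]
  | cons a l ih =>
    rw [foataCycle]
    split_ifs with ha
    · exact ih (by simpa [or_imp, forall_and] using ⟨hacc, ha⟩) (by simpa using hlast)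
    · simpa using ha

theorem foataUncycle_foataCycle {acc : List α} (v : List α) (hacc : ∀ b ∈ acc, p b)
    (hlast : ∀ y ∈ (acc ++ v).getLast?, p y = false) :
    foataUncycle p (foataCycle p acc v) = acc ++ v := by
  induction v generalizing acc with
  | nil =>
    obtain rfl := eq_nil_of_forall_getLast? hacc (by simpa using hlast)
    simp [foataCycle, foataUncycle]
  | cons a l ih =>
    rw [foataCycle]
    split_ifs with ha
    · simpa using ih (acc := acc ++ [a]) (by simpa [or_imp, forall_and] using ⟨hacc, ha⟩)
        (by simpa using hlast)
    · have hl : ∀ y ∈ l.getLast?, p y = false := forall_getLast?_of_cons hlast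
      have hhead := forall_head?_foataCycle (acc := []) l (by simp) (by simpa using hl)
      have htake : (foataCycle p [] l).takeWhile p = [] := by
        cases h : foataCycle p [] l with
        | nil => rfl
        | cons c t => exact takeWhile_cons_of_neg (by simpa using hhead c (by simp [h]))
      have hdrop : (foataCycle p [] l).dropWhile p = foataCycle p [] l := by
        cases h : foataCycle p [] l with
        | nil => rfl
        | cons c t => exact dropWhile_cons_of_neg (by simpa using hhead c (by simp [h]))
      rw [cons_append, foataUncycle, takeWhile_append_of_pos hacc,
        dropWhile_append_of_pos hacc, htake, hdrop, ih (by simp) (by simpa using hl)]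
      simp

theorem exists_cons_foataCycle {v : List α} (hv : v ≠ [])
    (hlast : ∀ y ∈ v.getLast?, p y = false) :
    ∃ a w, foataCycle p [] v = a :: w ∧ p a = false := by
  have hne : foataCycle p [] v ≠ [] :=
    fun h => hv (by simpa [h] using (foataCycle_perm (p := p) [] v).symm)
  obtain ⟨a, w, hG⟩ := exists_cons_of_ne_nil hne
  exact ⟨a, w, hG,
    forall_head?_foataCycle (acc := []) v (by simp) (by simpa using hlast) a (by simp [hG])⟩

end Cycle

variable [LinearOrder α]

def inversions : List α → ℕ
  | [] => 0
  | a :: l => l.countP (· < a) + inversions l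

/-- The major index of `l`, with the descent positions shifted by `k`. -/
def majorIndexFrom : ℕ → List α → ℕ
  | _, [] => 0
  | _, [_] => 0
  | k, a :: b :: t => (if b < a then k + 1 else 0) + majorIndexFrom (k + 1) (b :: t)

def majorIndex (l : List α) : ℕ := majorIndexFrom 0 l

theorem inversions_concat (l : List α) (x : α) :
    (l ++ [x]).inversions = l.inversions + l.countP (x < ·) := by
  induction l with
  | nil => rfl
  | cons a l ih =>
    simp only [cons_append, inversions, ih, countP_append, countP_cons, countP_nil]
    omega

theorem inversions_append_perm (s : List α) {t t' : List α} (h : t.Perm t') :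
    (s ++ t).inversions + t'.inversions = (s ++ t').inversions + t.inversions := by
  induction s with
  | nil => simp only [nil_append]; omega
  | cons a s ih =>
    simp only [cons_append, inversions, countP_append, h.countP_eq]
    omega

theorem inversions_cons_append (a : α) (u r : List α) :
    (a :: (u ++ r)).inversions + u.countP (a < ·) =
      (u ++ a :: r).inversions + u.countP (· < a) := by
  induction u with
  | nil => rfl
  | cons b u ih =>
    simp only [inversions, cons_append, countP_append, countP_cons] at ih ⊢
    by_cases hab : a < b
    · simp [hab, not_lt_of_gt hab]; omega
    · by_cases hba : b < a
      · simp [hab, hba]; omega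
      · simp [hab, hba]; omega

theorem majorIndexFrom_concat (x : α) (l : List α) (hl : l ≠ []) (k : ℕ) :
    majorIndexFrom k (l ++ [x]) =
      majorIndexFrom k l + if x < l.getLast hl then k + l.length else 0 := by
  induction l generalizing k with
  | nil => exact absurd rfl hl
  | cons a l ih =>
    rcases l with _ | ⟨b, t⟩
    · simp [majorIndexFrom]
    · have := ih (cons_ne_nil b t) (k + 1)
      simp only [cons_append, majorIndexFrom, getLast_cons_cons, length_cons] at this ⊢
      rw [this]
      by_cases hx : x < (b :: t).getLast (cons_ne_nil b t) <;>
        simp only [hx, if_true, if_false] <;> omega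

theorem majorIndex_concat (l : List α) (hl : l ≠ []) (x : α) :
    (l ++ [x]).majorIndex = l.majorIndex + if x < l.getLast hl then l.length else 0 := by
  simpa [majorIndex] using majorIndexFrom_concat x l hl 0

theorem inversions_cons_append_of_forall_lt {a : α} {u : List α} (r : List α)
    (h : ∀ b ∈ u, b < a) :
    (a :: (u ++ r)).inversions = (u ++ a :: r).inversions + u.length := by
  have key := inversions_cons_append a u r
  rw [countP_eq_zero.mpr fun b hb => by simpa using (h b hb).le,
    countP_eq_length.mpr fun b hb => by simpa using h b hb] at key
  omega

theorem inversions_cons_append_of_forall_gt {a : α} {u : List α} (r : List α)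
    (h : ∀ b ∈ u, a < b) :
    (a :: (u ++ r)).inversions + u.length = (u ++ a :: r).inversions := by
  have key := inversions_cons_append a u r
  rw [countP_eq_length.mpr fun b hb => by simpa using h b hb,
    countP_eq_zero.mpr fun b hb => by simpa using (h b hb).le] at key
  omega

variable {p : α → Bool}

theorem inversions_foataCycle_of_lt (hsep : ∀ b a, p b → p a = false → b < a) {acc : List α}
    (v : List α) (hacc : ∀ b ∈ acc, p b) (hlast : ∀ y ∈ (acc ++ v).getLast?, p y = false) :
    (foataCycle p acc v).inversions = (acc ++ v).inversions + (acc ++ v).countP p := by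
  induction v generalizing acc with
  | nil =>
    obtain rfl := eq_nil_of_forall_getLast? hacc (by simpa using hlast)
    rfl
  | cons a l ih =>
    rw [foataCycle]
    split_ifs with ha
    · simpa using ih (acc := acc ++ [a]) (by simpa [or_imp, forall_and] using ⟨hacc, ha⟩)
        (by simpa using hlast)
    · have hW := ih (acc := []) (by simp) (by simpa using forall_getLast?_of_cons hlast)
      simp only [nil_append] at hW
      have hrot := inversions_cons_append_of_forall_lt (foataCycle p [] l)
        fun b hb => hsep b a (hacc b hb) (by simpa using ha)
      have hperm := inversions_append_perm (acc ++ [a]) (foataCycle_perm (p := p) [] l)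
      have hcount : (acc ++ a :: l).countP p = acc.length + l.countP p := by
        simp [countP_eq_length.mpr hacc, ha]
      simp only [append_assoc, singleton_append, nil_append] at hperm
      simp only [cons_append, hcount]
      omega

theorem inversions_foataCycle_of_gt (hsep : ∀ b a, p b → p a = false → a < b) {acc : List α}
    (v : List α) (hacc : ∀ b ∈ acc, p b) (hlast : ∀ y ∈ (acc ++ v).getLast?, p y = false) :
    (foataCycle p acc v).inversions + (acc ++ v).countP p = (acc ++ v).inversions := by
  induction v generalizing acc with
  | nil =>
    obtain rfl := eq_nil_of_forall_getLast? hacc (by simpa using hlast)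
    rfl
  | cons a l ih =>
    rw [foataCycle]
    split_ifs with ha
    · simpa using ih (acc := acc ++ [a]) (by simpa [or_imp, forall_and] using ⟨hacc, ha⟩)
        (by simpa using hlast)
    · have hW := ih (acc := []) (by simp) (by simpa using forall_getLast?_of_cons hlast)
      simp only [nil_append] at hW
      have hrot := inversions_cons_append_of_forall_gt (foataCycle p [] l)
        fun b hb => hsep b a (hacc b hb) (by simpa using ha)
      have hperm := inversions_append_perm (acc ++ [a]) (foataCycle_perm (p := p) [] l)
      have hcount : (acc ++ a :: l).countP p = acc.length + l.countP p := by
        simp [countP_eq_length.mpr hacc, ha]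
      simp only [append_assoc, singleton_append, nil_append] at hperm
      simp only [cons_append, hcount]
      omega

def foataGamma (x : α) (v : List α) : List α :=
  match v.getLast? with
  | some y => if x < y then foataCycle (· ≤ x) [] v else foataCycle (x < ·) [] v
  | none => []

def foataUngamma (x : α) : List α → List α
  | [] => []
  | a :: w => if x < a then foataUncycle (· ≤ x) (a :: w) else foataUncycle (x < ·) (a :: w)

theorem foataGamma_perm (x : α) (v : List α) : (foataGamma x v).Perm v := by
  unfold foataGamma
  split
  · split_ifs <;> simpa using foataCycle_perm [] v
  · simp_all

theorem inversions_foataGamma_concat (x : α) (v : List α) :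
    (foataGamma x v ++ [x]).inversions =
      v.inversions + if ∃ y ∈ v.getLast?, x < y then v.length else 0 := by
  rw [inversions_concat, (foataGamma_perm x v).countP_eq, foataGamma]
  split
  · rename_i y hy
    simp only [Option.mem_def, hy, Option.some.injEq, exists_eq_left']
    -- Cycling adds one inversion per letter `≤ x` if `x < y` and otherwise removes one per
    -- letter `> x`; appending `x` adds one per letter `> x`.
    split_ifs with hxy
    · have key := inversions_foataCycle_of_lt (p := (· ≤ x)) (acc := []) (fun b a hb ha => by
        simp only [decide_eq_true_eq, decide_eq_false_iff_not, not_le] at hb ha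
        exact hb.trans_lt ha) v (by simp) (by simpa [hy] using hxy)
      have hsplit := length_eq_countP_add_countP (· ≤ x) (l := v)
      simp only [decide_eq_true_eq, not_le] at hsplit
      simp only [nil_append] at key
      omega
    · have key := inversions_foataCycle_of_gt (p := (x < ·)) (acc := []) (fun b a hb ha => by
        simp only [decide_eq_true_eq, decide_eq_false_iff_not, not_lt] at hb ha
        exact ha.trans_lt hb) v (by simp) (by simpa [hy] using hxy)
      simp only [nil_append] at key
      omega
  · simp_all

theorem foataUngamma_foataGamma (x : α) (v : List α) :
    foataUngamma x (foataGamma x v) = v := by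
  unfold foataGamma
  split
  · rename_i y hy
    have hv : v ≠ [] := by rintro rfl; simp at hy
    split_ifs with hxy
    · have hlast : ∀ z ∈ v.getLast?, decide (z ≤ x) = false := by simpa [hy] using hxy
      obtain ⟨a, w, hG, ha⟩ := exists_cons_foataCycle hv hlast
      rw [hG, foataUngamma, if_pos (by simpa using ha), ← hG,
        foataUncycle_foataCycle v (by simp) (by simpa using hlast), nil_append]
    · have hlast : ∀ z ∈ v.getLast?, decide (x < z) = false := by simpa [hy] using hxy
      obtain ⟨a, w, hG, ha⟩ := exists_cons_foataCycle hv hlast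
      rw [hG, foataUngamma, if_neg (by simpa using ha), ← hG,
        foataUncycle_foataCycle v (by simp) (by simpa using hlast), nil_append]
  · simp_all [foataUngamma]

/-- Foata's second fundamental transformation. -/
def foata (w : List α) : List α := w.foldl (fun v x => foataGamma x v ++ [x]) []

@[simp]
theorem foata_nil : foata ([] : List α) = [] := rfl

theorem foata_concat (w : List α) (x : α) : foata (w ++ [x]) = foataGamma x (foata w) ++ [x] :=
  foldl_concat _ _ _ _

theorem foata_perm (w : List α) : (foata w).Perm w := by
  induction w using reverseRecOn with
  | nil => rfl
  | append_singleton w x ih =>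
    rw [foata_concat]
    exact ((foataGamma_perm x _).trans ih).append_right [x]

theorem getLast?_foata (w : List α) : (foata w).getLast? = w.getLast? := by
  induction w using reverseRecOn with
  | nil => rfl
  | append_singleton w x _ => simp [foata_concat]

theorem inversions_foata (w : List α) : (foata w).inversions = w.majorIndex := by
  induction w using reverseRecOn with
  | nil => rfl
  | append_singleton w x ih =>
    rw [foata_concat, inversions_foataGamma_concat, ih, getLast?_foata,
      (foata_perm w).length_eq]
    rcases eq_or_ne w [] with rfl | hw
    · rfl
    · simp [majorIndex_concat w hw, getLast?_eq_some_getLast hw]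

theorem foata_injective : Function.Injective (foata : List α → List α) := by
  intro w w' h
  induction w using reverseRecOn generalizing w' with
  | nil => simpa [← h] using (foata_perm w').symm
  | append_singleton w x ih =>
    rcases w'.eq_nil_or_concat' with rfl | ⟨w', x', rfl⟩
    · simpa [h] using (foata_perm (w ++ [x])).symm
    · rw [foata_concat, foata_concat] at h
      obtain ⟨hγ, hx⟩ := append_inj' h rfl
      obtain rfl : x = x' := by simpa using hx
      have hγ' := congrArg (foataUngamma x) hγ
      rw [foataUngamma_foataGamma, foataUngamma_foataGamma] at hγ'
      rw [ih hγ']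

theorem sum_inversions_permutations_eq_sum_majorIndex {M : Type*} [AddCommMonoid M] (l : List α)
    (f : ℕ → M) : ∑ w ∈ l.permutations.toFinset, f w.inversions =
      ∑ w ∈ l.permutations.toFinset, f w.majorIndex := by
  have hmaps : Set.MapsTo foata (l.permutations.toFinset : Set (List α)) l.permutations.toFinset :=
    fun w hw => by simpa using (foata_perm w).trans (by simpa using hw)
  symm
  exact Finset.sum_nbij foata (fun w hw => hmaps hw) foata_injective.injOn
    (Finset.surjOn_of_injOn_of_card_le _ hmaps foata_injective.injOn le_rfl)
    fun w _ => by rw [inversions_foata]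

end List

theorem Finset.eq_of_forall_sum_powerset_eq {ι M : Type*} [DecidableEq ι] [AddCancelCommMonoid M]
    {f g : Finset ι → M}
    (h : ∀ S : Finset ι, ∑ T ∈ S.powerset, f T = ∑ T ∈ S.powerset, g T)
    (S : Finset ι) : f S = g S := by
  induction S using Finset.strongInduction with
  | H S ih =>
    have herase : ∑ T ∈ S.powerset.erase S, f T = ∑ T ∈ S.powerset.erase S, g T :=
      sum_congr rfl fun T hT => ih T <|
        (mem_powerset.mp (mem_of_mem_erase hT)).ssubset_of_ne (ne_of_mem_erase hT)
    have hS := h S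
    rw [← add_sum_erase _ f (mem_powerset_self S), ← add_sum_erase _ g (mem_powerset_self S),
      herase] at hS
    exact add_right_cancel hS

theorem Finset.sum_powerset_sum_filter_eq {ι κ M : Type*} [Fintype ι] [DecidableEq κ]
    [AddCommMonoid M] (g : ι → Finset κ) (F : ι → M) (S : Finset κ) :
    ∑ T ∈ S.powerset, ∑ i with g i = T, F i = ∑ i with g i ⊆ S, F i := by
  rw [← sum_fiberwise_of_maps_to (t := S.powerset) (g := g) fun i hi => by simpa using hi]
  refine sum_congr rfl fun T hT => sum_congr ?_ fun _ _ => rfl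
  ext i
  simp only [mem_filter, mem_univ, true_and, iff_and_self]
  rintro rfl
  exact mem_powerset.mp hT

theorem wInv_succ (N : ℕ) (w : ℕ → ℤ) :
    wInv (N + 1) w = wInv N w + #{i ∈ range N | w N < w i} := by
  simp only [wInv, card_filter, sum_product, sum_range_succ, sum_add_distrib]
  have hlast : ∑ j ∈ range N, (if N < j ∧ w j < w N then 1 else 0) = 0 :=
    sum_eq_zero fun j hj => if_neg fun h => by simp at hj; omega
  have hmid : ∑ i ∈ range N, (if i < N ∧ w N < w i then 1 else 0) =
      ∑ i ∈ range N, if w N < w i then 1 else 0 :=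
    sum_congr rfl fun i hi => by simp [mem_range.mp hi]
  simp [hlast, hmid]

theorem wInv_eq_inversions (N : ℕ) (w : ℕ → ℤ) :
    wInv N w = ((List.range N).map w).inversions := by
  induction N with
  | zero => rfl
  | succ N ih =>
    have hcount : ((List.range N).map w).countP (w N < ·) = #{i ∈ range N | w N < w i} := by
      rw [List.countP_map, List.countP_eq_length_filter, card_def, filter_val, range_val,
        Multiset.range, Multiset.filter_coe, Multiset.coe_card]
      simp [Function.comp_def]
    rw [wInv_succ, ih, List.range_succ, List.map_append, List.map_singleton,
      List.inversions_concat, hcount]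

theorem wMaj_succ {N : ℕ} (hN : 0 < N) (w : ℕ → ℤ) :
    wMaj (N + 1) w = wMaj N w + if w N < w (N - 1) then N else 0 := by
  simp only [wMaj, wDes, ← insert_Ico_right_eq_Ico_add_one (a := 1) hN, filter_insert]
  split_ifs
  · rw [sum_insert (by simp), add_comm]
  · rfl

theorem wMaj_eq_majorIndex (N : ℕ) (w : ℕ → ℤ) :
    wMaj N w = ((List.range N).map w).majorIndex := by
  induction N with
  | zero => rfl
  | succ N ih =>
    rcases Nat.eq_zero_or_pos N with rfl | hN
    · rfl
    have hne : (List.range N).map w ≠ [] := by simp; omega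
    rw [wMaj_succ hN, ih, List.range_succ, List.map_append, List.map_singleton,
      List.majorIndex_concat _ hne, List.getLast_map, List.getLast_range, List.length_map,
      List.length_range]

theorem wInv_congr_of_lt_iff {N : ℕ} {w w' : ℕ → ℤ}
    (h : ∀ i j, i < j → j < N → (w j < w i ↔ w' j < w' i)) : wInv N w = wInv N w' := by
  unfold wInv
  congr 1
  refine filter_congr fun ij hij => ?_
  simp only [mem_product, mem_range] at hij
  exact and_congr_right fun hlt => h _ _ hlt hij.2

theorem wDes_congr_of_lt_iff {N : ℕ} {w w' : ℕ → ℤ}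
    (h : ∀ i j, i < j → j < N → (w j < w i ↔ w' j < w' i)) : wDes N w = wDes N w' :=
  filter_congr fun i hi => by simp only [mem_Ico] at hi; exact h _ _ (by omega) hi.2

theorem le_of_forall_notMem_wDes {N : ℕ} {w : ℕ → ℤ} {u v : ℕ} (huv : u ≤ v)
    (hv : v < N) (h : ∀ k, u < k → k ≤ v → k ∉ wDes N w) : w u ≤ w v := by
  induction v, huv using Nat.le_induction with
  | base => rfl
  | succ v huv ih =>
    have hstep : w v ≤ w (v + 1) := by
      simpa [wDes, hv] using h (v + 1) (by omega) le_rfl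
    exact (ih (by omega) fun k hk hkv => h k hk (by omega)).trans hstep

/-- The letter of the value `v` after cutting the values into blocks at the elements of `S`:
values `v - 1` and `v` share a block iff `v ∉ S`. -/
def blockLetter (S : Finset ℕ) (v : ℕ) : ℤ := Nat.count (· ∈ S) (v + 1)

theorem blockLetter_succ (S : Finset ℕ) (v : ℕ) :
    blockLetter S (v + 1) = blockLetter S v + if v + 1 ∈ S then 1 else 0 := by
  rw [blockLetter, blockLetter, Nat.count_succ]
  split_ifs <;> simp

theorem blockLetter_mono (S : Finset ℕ) : Monotone (blockLetter S) :=
  fun _ _ h => Int.ofNat_le.mpr (Nat.count_monotone _ (Nat.succ_le_succ h))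

theorem notMem_of_blockLetter_eq {S : Finset ℕ} {u v k : ℕ} (huk : u < k) (hkv : k ≤ v)
    (h : blockLetter S u = blockLetter S v) : k ∉ S := by
  intro hk
  have hstep := blockLetter_succ S (k - 1)
  rw [Nat.sub_add_cancel (by omega : 1 ≤ k), if_pos hk] at hstep
  have h1 := blockLetter_mono S (show u ≤ k - 1 by omega)
  have h2 := blockLetter_mono S hkv
  omega

section Standardization

variable {n : ℕ} {S : Finset ℕ}

theorem inv_lt_inv_of_blockLetter_eq {π : Equiv.Perm (Fin n)} (hS : sDes n π⁻¹ ⊆ S)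
    {u v : Fin n} (huv : u < v) (h : blockLetter S u = blockLetter S v) :
    π⁻¹ u < π⁻¹ v := by
  have hle := le_of_forall_notMem_wDes (w := sword n π⁻¹) huv.le v.isLt
    fun k huk hkv hk => notMem_of_blockLetter_eq huk hkv h (hS hk)
  simp only [sword, u.isLt, v.isLt, dif_pos, add_le_add_iff_right, Nat.cast_le] at hle
  exact lt_of_le_of_ne hle fun he => huv.ne (π⁻¹.injective he)

theorem apply_lt_apply_iff_blockLetter {π : Equiv.Perm (Fin n)} (hS : sDes n π⁻¹ ⊆ S)
    {i j : Fin n} (hij : i < j) : π j < π i ↔ blockLetter S (π j) < blockLetter S (π i) := by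
  refine ⟨fun h => (blockLetter_mono S h.le).lt_of_ne fun he => ?_,
    fun h => lt_of_not_ge fun h' => h.not_ge (blockLetter_mono S h')⟩
  exact lt_asymm hij (by simpa using inv_lt_inv_of_blockLetter_eq hS h he)

theorem sDes_inv_subset_iff {π : Equiv.Perm (Fin n)} :
    sDes n π⁻¹ ⊆ S ↔ π⁻¹ = Tuple.sort fun i => blockLetter S (π i) := by
  rw [Tuple.eq_sort_iff]
  refine ⟨fun hS => ⟨?_, fun u v huv h => ?_⟩, fun ⟨_, hsort⟩ k hk => ?_⟩
  · simpa [Function.comp_def] using (blockLetter_mono S).comp Fin.val_strictMono.monotone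
  · simp only [Equiv.Perm.coe_inv, Equiv.apply_symm_apply] at h
    exact inv_lt_inv_of_blockLetter_eq hS huv h
  · rw [sDes, wDes, Finset.mem_filter, Finset.mem_Ico] at hk
    obtain ⟨⟨hk1, hkn⟩, hdes⟩ := hk
    by_contra hkS
    have hstep := blockLetter_succ S (k - 1)
    rw [Nat.sub_add_cancel hk1, if_neg hkS, add_zero] at hstep
    have := hsort ⟨k - 1, by omega⟩ ⟨k, hkn⟩ (Fin.mk_lt_mk.mpr (by omega))
      (by simpa [Function.comp_def] using hstep.symm)
    simp only [sword, dif_pos hkn, dif_pos (show k - 1 < n by omega)] at hdes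
    rw [Fin.lt_def] at this
    omega

def blockWord (n : ℕ) (S : Finset ℕ) (π : Equiv.Perm (Fin n)) (i : ℕ) : ℤ :=
  if h : i < n then blockLetter S (π ⟨i, h⟩) else 0

theorem map_range_blockWord (π : Equiv.Perm (Fin n)) :
    (List.range n).map (blockWord n S π) = List.ofFn fun i => blockLetter S (π i) :=
  List.ext_getElem (by simp) fun i h _ => by simp at h; simp [blockWord, h]

theorem sword_lt_sword_iff {π : Equiv.Perm (Fin n)} (hS : sDes n π⁻¹ ⊆ S) {i j : ℕ}
    (hij : i < j) (hj : j < n) :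
    sword n π j < sword n π i ↔ blockWord n S π j < blockWord n S π i := by
  simp only [sword, blockWord, dif_pos hj, dif_pos (hij.trans hj)]
  rw [← apply_lt_apply_iff_blockLetter hS (Fin.mk_lt_mk.mpr hij), Fin.lt_def]
  omega

theorem sInv_eq_inversions {π : Equiv.Perm (Fin n)} (hS : sDes n π⁻¹ ⊆ S) :
    sInv n π = (List.ofFn fun i => blockLetter S (π i)).inversions := by
  rw [sInv, wInv_congr_of_lt_iff fun i j hij hj => sword_lt_sword_iff hS hij hj,
    wInv_eq_inversions, map_range_blockWord]

theorem sMaj_eq_majorIndex {π : Equiv.Perm (Fin n)} (hS : sDes n π⁻¹ ⊆ S) :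
    sMaj n π = (List.ofFn fun i => blockLetter S (π i)).majorIndex := by
  rw [sMaj, wMaj, wDes_congr_of_lt_iff fun i j hij hj => sword_lt_sword_iff hS hij hj, ← wMaj,
    wMaj_eq_majorIndex, map_range_blockWord]

theorem exists_sDes_inv_subset_ofFn_eq {w : List ℤ}
    (hw : w.Perm (List.ofFn fun i : Fin n => blockLetter S i)) :
    ∃ π : Equiv.Perm (Fin n),
      sDes n π⁻¹ ⊆ S ∧ (List.ofFn fun i => blockLetter S (π i)) = w := by
  have hlen : w.length = n := by simpa using hw.length_eq
  obtain ⟨g, rfl⟩ : ∃ g : Fin n → ℤ, List.ofFn g = w :=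
    ⟨fun i => w[(i : ℕ)], List.ext_getElem (by simp [hlen]) fun _ _ _ => by simp⟩
  set τ := Tuple.sort g
  have hsorted : g ∘ τ = fun i : Fin n => blockLetter S i := List.ofFn_injective <|
    ((τ.ofFn_comp_perm g).trans hw).eq_of_sortedLE (Tuple.monotone_sort g).sortedLE_ofFn
      ((blockLetter_mono S).comp Fin.val_strictMono.monotone).sortedLE_ofFn
  have hg : (fun i => blockLetter S (τ⁻¹ i)) = g := funext fun i => by
    simpa using (congrFun hsorted (τ⁻¹ i)).symm
  refine ⟨τ⁻¹, ?_, by rw [hg]⟩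
  rw [sDes_inv_subset_iff, hg, inv_inv]

theorem sum_sDes_inv_subset_eq_sum_permutations {M : Type*} [AddCommMonoid M]
    (g : List ℤ → M) :
    ∑ π : Equiv.Perm (Fin n) with sDes n π⁻¹ ⊆ S,
        g (List.ofFn fun i => blockLetter S (π i)) =
      ∑ w ∈ (List.ofFn fun i : Fin n => blockLetter S i).permutations.toFinset, g w := by
  refine sum_nbij (fun π => List.ofFn fun i => blockLetter S (π i))
    (fun π _ => List.mem_toFinset.mpr <| List.mem_permutations.mpr <|
      π.ofFn_comp_perm fun i => blockLetter S i)
    (fun π hπ π' hπ' h => ?_) (fun w hw => ?_) fun _ _ => rfl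
  · simp only [coe_filter, mem_univ, true_and, Set.mem_ofPred_eq] at hπ hπ'
    have := List.ofFn_injective h
    rw [sDes_inv_subset_iff, this, ← sDes_inv_subset_iff.mp hπ'] at hπ
    exact inv_injective hπ
  · obtain ⟨π, hπ, rfl⟩ := exists_sDes_inv_subset_ofFn_eq (by simpa using hw)
    exact ⟨π, by simpa using hπ, rfl⟩

end Standardization

theorem sum_sDes_inv_subset_sInv_eq_sMaj {M : Type*} [AddCommMonoid M] (n : ℕ) (S : Finset ℕ)
    (f : ℕ → M) :
    ∑ π : Equiv.Perm (Fin n) with sDes n π⁻¹ ⊆ S, f (sInv n π) =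
      ∑ π : Equiv.Perm (Fin n) with sDes n π⁻¹ ⊆ S, f (sMaj n π) := by
  calc _ = ∑ π : Equiv.Perm (Fin n) with sDes n π⁻¹ ⊆ S,
          f (List.ofFn fun i => blockLetter S (π i)).inversions :=
        sum_congr rfl fun π hπ => by rw [sInv_eq_inversions (mem_filter.mp hπ).2]
    _ = ∑ π : Equiv.Perm (Fin n) with sDes n π⁻¹ ⊆ S,
          f (List.ofFn fun i => blockLetter S (π i)).majorIndex := by
        rw [sum_sDes_inv_subset_eq_sum_permutations fun w => f w.inversions,
          sum_sDes_inv_subset_eq_sum_permutations fun w => f w.majorIndex,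
          List.sum_inversions_permutations_eq_sum_majorIndex]
    _ = _ := sum_congr rfl fun π hπ => by rw [sMaj_eq_majorIndex (mem_filter.mp hπ).2]

theorem sum_sDes_inv_eq_sInv_eq_sMaj {M : Type*} [AddCancelCommMonoid M] (n : ℕ) (S : Finset ℕ)
    (f : ℕ → M) :
    ∑ π : Equiv.Perm (Fin n) with sDes n π⁻¹ = S, f (sInv n π) =
      ∑ π : Equiv.Perm (Fin n) with sDes n π⁻¹ = S, f (sMaj n π) := by
  refine Finset.eq_of_forall_sum_powerset_eq
    (f := fun T => ∑ π : Equiv.Perm (Fin n) with sDes n π⁻¹ = T, f (sInv n π))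
    (g := fun T => ∑ π : Equiv.Perm (Fin n) with sDes n π⁻¹ = T, f (sMaj n π))
    (fun T => ?_) S
  rw [sum_powerset_sum_filter_eq (fun π => sDes n π⁻¹) (fun π => f (sInv n π)),
    sum_powerset_sum_filter_eq (fun π => sDes n π⁻¹) (fun π => f (sMaj n π)),
    sum_sDes_inv_subset_sInv_eq_sMaj]

theorem sum_pow_sInv_mul_pow_sMaj_inv {R : Type*} [CommRing R] (q t : R) (n : ℕ) :
    ∑ π : Equiv.Perm (Fin n), q ^ sInv n π * t ^ sMaj n π⁻¹ =
      ∑ π : Equiv.Perm (Fin n), q ^ sMaj n π * t ^ sMaj n π⁻¹ := by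
  have hmaps : ∀ π ∈ (univ : Finset (Equiv.Perm (Fin n))),
      sDes n π⁻¹ ∈ univ.image fun π : Equiv.Perm (Fin n) => sDes n π⁻¹ :=
    fun π _ => mem_image_of_mem _ (mem_univ π)
  rw [← sum_fiberwise_of_maps_to hmaps, ← sum_fiberwise_of_maps_to hmaps]
  refine sum_congr rfl fun S _ => ?_
  have hmaj : ∀ π ∈ ({π | sDes n π⁻¹ = S} : Finset (Equiv.Perm (Fin n))),
      sMaj n π⁻¹ = ∑ i ∈ S, i :=
    fun π hπ => by rw [sMaj, wMaj, ← sDes, (mem_filter.mp hπ).2]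
  calc _ = ∑ π : Equiv.Perm (Fin n) with sDes n π⁻¹ = S,
          q ^ sInv n π * t ^ ∑ i ∈ S, i :=
        sum_congr rfl fun π hπ => by rw [hmaj π hπ]
    _ = ∑ π : Equiv.Perm (Fin n) with sDes n π⁻¹ = S, q ^ sMaj n π * t ^ ∑ i ∈ S, i :=
        sum_sDes_inv_eq_sInv_eq_sMaj n S fun k => q ^ k * t ^ ∑ i ∈ S, i
    _ = _ := sum_congr rfl fun π hπ => by rw [hmaj π hπ]

theorem stmt3_general (n : ℕ) :
    (∑ π : Equiv.Perm (Fin n),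
        (RatFunc.C 𝕢 : RatFunc (RatFunc ℚ)) ^ sInv n π * RatFunc.X ^ sMaj n π⁻¹) =
      (∑ π : Equiv.Perm (Fin n),
        (RatFunc.C 𝕢 : RatFunc (RatFunc ℚ)) ^ sMaj n π * RatFunc.X ^ sMaj n π⁻¹) :=
  sum_pow_sInv_mul_pow_sMaj_inv _ _ n

theorem stmt3 (n : ℕ) (hn : 0 < n) :
    (∑ π : Equiv.Perm (Fin n),
        (RatFunc.C 𝕢 : RatFunc (RatFunc ℚ)) ^ sInv n π * RatFunc.X ^ sMaj n π⁻¹) =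
      (∑ π : Equiv.Perm (Fin n),
        (RatFunc.C 𝕢 : RatFunc (RatFunc ℚ)) ^ sMaj n π * RatFunc.X ^ sMaj n π⁻¹) :=
  stmt3_general n

end Statements
end

section
/- Let σ ∈ B_n and M = {m_1 < ... < m_t} ⊆ [0,n-1], with m_{t+1} = n. Then Des_B(σ⁻¹) ⊆ M if and only if there exist unique integers r_1,...,r_t with m_i ≤ r_i ≤ m_{i+1} for all i such that (σ(1),...,σ(n)) is a shuffle of the increasing sequences (1,...,m_1), (-r_1,...,-(m_1+1)), (r_1+1,...,m_2), ..., (-r_t,...,-(m_t+1)), (r_t+1,...,n). -/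
open Finset

noncomputable section Statements

open Finset RatFunc

local notation "𝕢" => (RatFunc.X : RatFunc ℚ)

/-!
Write `τ = σ⁻¹`, so that `τ x` is the position of the letter `x` in the word `σ(1) ⋯ σ(n)`.
Since `τ 0 = 0`, `Des_B(τ) ⊆ M` says that `τ` increases on `[0, m₁]` and on every block
`m_s < i ≤ m_{s+1}`. On such a block the points where `τ` is negative then form an initial segment
`(m_s, r_s]`, which determines `r_s`; as `τ (-u) = -τ u`, the letters of the word with absolute
value in the block are `-r_s < ⋯ < -(m_s + 1)` and `r_s + 1 < ⋯ < m_{s+1}`, and both runs occur in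
increasing order. Conversely, if these runs occur in order, reading them back through `τ` shows
that `τ` increases on each block.
-/

theorem IsSigned.inv {n : ℕ} {σ : Equiv.Perm ℤ} (h : IsSigned n σ) : IsSigned n σ⁻¹ := by
  refine ⟨fun a => ?_, fun a ha => ?_⟩
  · rw [Equiv.Perm.inv_eq_iff_eq, h.1]
    simp
  · rw [Equiv.Perm.inv_eq_iff_eq, h.2 a ha]

theorem IsSigned.apply_ne_zero {n : ℕ} {σ : Equiv.Perm ℤ} (h : IsSigned n σ) {a : ℤ}
    (ha : a ≠ 0) : σ a ≠ 0 := by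
  rw [← h.map_zero]
  exact σ.injective.ne ha

theorem List.sublist_iff_subset_and_pairwise {α : Type*} {r : α → α → Prop} [IsStrictOrder α r]
    {l k : List α} (hk : k.Pairwise r) : l.Sublist k ↔ l ⊆ k ∧ l.Pairwise r :=
  ⟨fun h => ⟨h.subset, hk.sublist h⟩, fun ⟨hsub, hl⟩ =>
    sublist_of_subperm_of_pairwise (subperm_of_subset hl.nodup hsub) hl hk⟩

section Word

variable {n : ℕ} {σ : Equiv.Perm ℤ}

theorem mem_map_bword_iff {x : ℤ} :
    x ∈ (List.range n).map (bword n σ) ↔ 1 ≤ σ⁻¹ x ∧ σ⁻¹ x ≤ n := by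
  simp only [List.mem_map, List.mem_range, bword]
  constructor
  · rintro ⟨i, hi, rfl⟩
    simp only [Equiv.Perm.coe_inv, Equiv.symm_apply_apply]
    omega
  · rintro ⟨h1, h2⟩
    refine ⟨(σ⁻¹ x - 1).toNat, by omega, ?_⟩
    rw [show (((σ⁻¹ x - 1).toNat : ℕ) : ℤ) + 1 = σ⁻¹ x by omega]
    simp

theorem IsSigned.mem_map_bword_iff (hσ : IsSigned n σ) {x : ℤ} :
    x ∈ (List.range n).map (bword n σ) ↔ |x| ≤ n ∧ 0 < σ⁻¹ x := by
  rw [_root_.mem_map_bword_iff]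
  constructor
  · rintro ⟨h1, h2⟩
    have := hσ.abs_apply_le (a := σ⁻¹ x) (abs_le.2 ⟨by omega, h2⟩)
    simp only [Equiv.Perm.coe_inv, Equiv.apply_symm_apply] at this
    exact ⟨this, h1⟩
  · rintro ⟨hx, hpos⟩
    exact ⟨hpos, (abs_le.1 (hσ.inv.abs_apply_le hx)).2⟩

theorem sublist_map_bword_iff {l : List ℤ} :
    l.Sublist ((List.range n).map (bword n σ)) ↔
      (∀ x ∈ l, x ∈ (List.range n).map (bword n σ)) ∧ (l.map ⇑σ⁻¹).Pairwise (· < ·) := by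
  set k := (List.range n).map (fun i : ℕ => (i : ℤ) + 1)
  have hword : (List.range n).map (bword n σ) = k.map σ := by
    simp only [k, List.map_map]; rfl
  have hk : k.Pairwise (· < ·) := by
    simpa [k, List.pairwise_map] using List.pairwise_lt_range
  have hsub : l.Sublist (k.map σ) ↔ (l.map ⇑σ⁻¹).Sublist k := by
    constructor
    · intro h
      simpa [List.map_map] using h.map ⇑σ⁻¹
    · intro h
      simpa [List.map_map] using h.map σ
  have hmem : ∀ x, x ∈ k.map σ ↔ σ⁻¹ x ∈ k := fun x =>
    ⟨fun h => by obtain ⟨a, ha, rfl⟩ := List.mem_map.1 h; simpa,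
      fun h => List.mem_map.2 ⟨_, h, by simp⟩⟩
  rw [hword, hsub, List.sublist_iff_subset_and_pairwise hk]
  simp only [List.subset_def, List.mem_map, forall_exists_index, and_imp,
    forall_apply_eq_imp_iff₂, hmem]

theorem IsSigned.neg_notMem_map_bword (hσ : IsSigned n σ) {x : ℤ}
    (hx : x ∈ (List.range n).map (bword n σ)) : -x ∉ (List.range n).map (bword n σ) := by
  rw [hσ.mem_map_bword_iff] at hx ⊢
  rw [hσ.inv.1]
  omega

end Word

-- In `fun k => c + k` the cast `ℕ → ℤ` is applied to the list `List.range L`, not to `k`.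
theorem map_range_add_eq (c : ℤ) (L : ℕ) :
    ((List.range L).map (fun k => c + k) : List ℤ) = (List.range L).map (fun k : ℕ => c + k) := by
  simp only [List.pure_def, List.bind_eq_flatMap, ← List.map_eq_flatMap, List.map_map,
    Function.comp_def]

theorem pairwise_map_range_add_iff (f : ℤ → ℤ) (c : ℤ) (L : ℕ) :
    (((List.range L).map (fun k => c + k)).map f).Pairwise (· < ·) ↔
      ∀ k : ℕ, k + 1 < L → f (c + k) < f (c + k + 1) := by
  rw [map_range_add_eq, ← List.isChain_iff_pairwise, List.map_map, List.isChain_map,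
    List.isChain_range]
  refine forall_congr' fun k => ?_
  rw [Function.comp_apply, Function.comp_apply, Nat.succ_eq_add_one, Nat.cast_succ, add_assoc]
  exact imp_congr_left (by omega)

-- The runs `-r, …, -(a + 1)` and `r + 1, …, b`, spelled as in `stmt9`, so that `runs m r` below
-- unfolds to the list of runs there.
def negRun (a r : ℕ) : List ℤ := (List.range (r - a)).map (fun k => -(r : ℤ) + k)

def posRun (r b : ℕ) : List ℤ := (List.range (b - r)).map (fun k => (r : ℤ) + 1 + k)

theorem range'_one_map_natCast (b : ℕ) :
    (List.range' 1 b).map (fun k => (k : ℤ)) = posRun 0 b := by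
  simp [posRun, List.range'_eq_map_range, ← List.map_eq_flatMap]

theorem mem_negRun {a r : ℕ} {x : ℤ} : x ∈ negRun a r ↔ a < -x ∧ -x ≤ r := by
  rw [negRun, map_range_add_eq, List.mem_map]
  exact ⟨by rintro ⟨k, hk, rfl⟩; rw [List.mem_range] at hk; omega,
    fun h => ⟨(x + r).toNat, List.mem_range.2 (by omega), by omega⟩⟩

theorem mem_posRun {r b : ℕ} {x : ℤ} : x ∈ posRun r b ↔ r < x ∧ x ≤ b := by
  rw [posRun, map_range_add_eq, List.mem_map]
  exact ⟨by rintro ⟨k, hk, rfl⟩; rw [List.mem_range] at hk; omega,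
    fun h => ⟨(x - r - 1).toNat, List.mem_range.2 (by omega), by omega⟩⟩

theorem pairwise_map_negRun_iff (f : ℤ → ℤ) (a r : ℕ) :
    ((negRun a r).map f).Pairwise (· < ·) ↔ ∀ i : ℕ, a < i → i < r → f (-(i + 1)) < f (-i) := by
  rw [negRun, pairwise_map_range_add_iff]
  constructor
  · intro h i hai hir
    have := h (r - 1 - i) (by omega)
    rwa [show -(r : ℤ) + ((r - 1 - i : ℕ) : ℤ) = -(i + 1) by omega,
      show -(i + 1 : ℤ) + 1 = -i by ring] at this
  · intro h k hk
    have := h (r - 1 - k) (by omega) (by omega)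
    rwa [show -(((r - 1 - k : ℕ) : ℤ) + 1) = -r + k by omega,
      show -((r - 1 - k : ℕ) : ℤ) = -r + k + 1 by omega] at this

theorem pairwise_map_posRun_iff (f : ℤ → ℤ) (r b : ℕ) :
    ((posRun r b).map f).Pairwise (· < ·) ↔ ∀ i : ℕ, r < i → i < b → f i < f (i + 1) := by
  rw [posRun, pairwise_map_range_add_iff]
  constructor
  · intro h i hri hib
    have := h (i - r - 1) (by omega)
    rwa [show (r : ℤ) + 1 + ((i - r - 1 : ℕ) : ℤ) = i by omega] at this
  · intro h k hk
    simpa [add_assoc, add_comm, add_left_comm] using h (r + 1 + k) (by omega) (by omega)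

@[simp] theorem length_negRun (a r : ℕ) : (negRun a r).length = r - a := by
  simp [negRun]

@[simp] theorem length_posRun (r b : ℕ) : (posRun r b).length = b - r := by
  simp [posRun]

def SignSplit (τ : Equiv.Perm ℤ) (a b r : ℕ) : Prop :=
  ∀ u : ℕ, a < u → u ≤ b → (τ u < 0 ↔ u ≤ r)

theorem SignSplit.eq {τ : Equiv.Perm ℤ} {a b r r' : ℕ} (h : SignSplit τ a b r)
    (h' : SignSplit τ a b r') (hr : a ≤ r ∧ r ≤ b) (hr' : a ≤ r' ∧ r' ≤ b) : r = r' := by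
  have key : ∀ u, a < u → u ≤ b → (u ≤ r ↔ u ≤ r') := fun u h₁ h₂ =>
    (h u h₁ h₂).symm.trans (h' u h₁ h₂)
  rcases lt_trichotomy r r' with hlt | heq | hgt
  · exact absurd ((key r' (by omega) hr'.2).2 le_rfl) (by omega)
  · exact heq
  · exact absurd ((key r (by omega) hr.2).1 le_rfl) (by omega)

theorem Nat.exists_forall_iff_le_of_downward_closed {P : ℕ → Prop} {a b : ℕ} (hab : a ≤ b)
    (hP : ∀ u v, a < u → u ≤ v → v ≤ b → P v → P u) :
    ∃ r, (a ≤ r ∧ r ≤ b) ∧ ∀ u, a < u → u ≤ b → (P u ↔ u ≤ r) := by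
  classical
  set r := Nat.findGreatest (fun u => u ≤ a ∨ P u) b
  have hr : r ≤ a ∨ P r :=
    Nat.findGreatest_spec (P := fun u => u ≤ a ∨ P u) hab (Or.inl le_rfl)
  refine ⟨r, ⟨Nat.le_findGreatest hab (Or.inl le_rfl), Nat.findGreatest_le b⟩,
    fun u hau hub => ⟨fun hu => Nat.le_findGreatest hub (Or.inr hu), fun hur => ?_⟩⟩
  exact hP u r hau hur (Nat.findGreatest_le b) (hr.resolve_left (by omega))

theorem exists_signSplit {τ : Equiv.Perm ℤ} {a b : ℕ} (hab : a ≤ b)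
    (hasc : ∀ i : ℕ, a < i → i < b → τ i < τ (i + 1)) :
    ∃ r, (a ≤ r ∧ r ≤ b) ∧ SignSplit τ a b r := by
  have hmono : StrictMonoOn (fun i : ℕ => τ i) (Set.Icc (a + 1) b) :=
    strictMonoOn_of_lt_add_one Set.ordConnected_Icc fun i _ hi hi' => by
      simp only [Set.mem_Icc] at hi hi'
      exact_mod_cast hasc i (by omega) (by omega)
  refine Nat.exists_forall_iff_le_of_downward_closed hab fun u v hau huv hvb hv => ?_
  exact (hmono.monotoneOn ⟨by omega, by omega⟩ ⟨by omega, hvb⟩ huv).trans_lt hv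

section Blocks

variable {n : ℕ} {σ : Equiv.Perm ℤ}

theorem IsSigned.negRun_sublist_iff (hσ : IsSigned n σ) {a r : ℕ} (hrn : r ≤ n) :
    (negRun a r).Sublist ((List.range n).map (bword n σ)) ↔
      (∀ u : ℕ, a < u → u ≤ r → σ⁻¹ u < 0) ∧
        ∀ i : ℕ, a < i → i < r → σ⁻¹ i < σ⁻¹ (i + 1) := by
  rw [sublist_map_bword_iff, pairwise_map_negRun_iff]
  refine and_congr ⟨fun h u hau hur => ?_, fun h x hx => ?_⟩ (forall₃_congr fun i _ _ => ?_)
  · have := h (-u) (mem_negRun.2 (by omega))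
    rw [hσ.mem_map_bword_iff, hσ.inv.1] at this
    omega
  · rw [mem_negRun] at hx
    have := h (-x).toNat (by omega) (by omega)
    rw [show (((-x).toNat : ℕ) : ℤ) = -x by omega, hσ.inv.1] at this
    exact hσ.mem_map_bword_iff.2 ⟨abs_le.2 ⟨by omega, by omega⟩, by omega⟩
  · rw [hσ.inv.1, hσ.inv.1, neg_lt_neg_iff]

theorem IsSigned.posRun_sublist_iff (hσ : IsSigned n σ) {r b : ℕ} (hbn : b ≤ n) :
    (posRun r b).Sublist ((List.range n).map (bword n σ)) ↔
      (∀ u : ℕ, r < u → u ≤ b → 0 < σ⁻¹ u) ∧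
        ∀ i : ℕ, r < i → i < b → σ⁻¹ i < σ⁻¹ (i + 1) := by
  rw [sublist_map_bword_iff, pairwise_map_posRun_iff]
  refine and_congr ⟨fun h u hru hub => ?_, fun h x hx => ?_⟩ Iff.rfl
  · exact (hσ.mem_map_bword_iff.1 (h u (mem_posRun.2 (by omega)))).2
  · rw [mem_posRun] at hx
    have := h x.toNat (by omega) (by omega)
    rw [show ((x.toNat : ℕ) : ℤ) = x by omega] at this
    exact hσ.mem_map_bword_iff.2 ⟨abs_le.2 ⟨by omega, by omega⟩, this⟩

theorem IsSigned.posRun_zero_sublist_iff (hσ : IsSigned n σ) {b : ℕ} (hbn : b ≤ n) :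
    (posRun 0 b).Sublist ((List.range n).map (bword n σ)) ↔
      ∀ i < b, σ⁻¹ i < σ⁻¹ (i + 1) := by
  rw [hσ.posRun_sublist_iff hbn]
  constructor
  · rintro ⟨hpos, hasc⟩ i hib
    rcases Nat.eq_zero_or_pos i with rfl | hi
    · simpa [hσ.inv.map_zero] using hpos 1 one_pos hib
    · exact hasc i hi hib
  · intro hasc
    have hmono : StrictMonoOn (fun i : ℕ => σ⁻¹ i) (Set.Icc 0 b) :=
      strictMonoOn_of_lt_add_one Set.ordConnected_Icc fun i _ _ hi' => by
        simp only [Set.mem_Icc] at hi'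
        exact_mod_cast hasc i (by omega)
    refine ⟨fun u hu hub => ?_, fun i _ hib => hasc i hib⟩
    simpa [hσ.inv.map_zero] using
      hmono (Set.left_mem_Icc.2 (Nat.zero_le b)) ⟨Nat.zero_le u, hub⟩ hu

theorem IsSigned.negRun_sublist_and_posRun_sublist_iff (hσ : IsSigned n σ) {a r b : ℕ}
    (har : a ≤ r) (hrb : r ≤ b) (hbn : b ≤ n) :
    (negRun a r).Sublist ((List.range n).map (bword n σ)) ∧
        (posRun r b).Sublist ((List.range n).map (bword n σ)) ↔
      SignSplit σ⁻¹ a b r ∧ ∀ i : ℕ, a < i → i < b → σ⁻¹ i < σ⁻¹ (i + 1) := by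
  rw [hσ.negRun_sublist_iff (hrb.trans hbn), hσ.posRun_sublist_iff hbn]
  have hne : ∀ u : ℕ, r < u → σ⁻¹ u ≠ 0 := fun u hu => hσ.inv.apply_ne_zero (by omega)
  constructor
  · rintro ⟨⟨hneg, hascN⟩, hpos, hascP⟩
    refine ⟨fun u hau hub => ⟨fun hu => ?_, hneg u hau⟩, fun i hai hib => ?_⟩
    · by_contra hur
      exact absurd (hpos u (by omega) hub) (by omega)
    · rcases lt_trichotomy i r with hir | rfl | hri
      · exact hascN i hai hir
      · have h₁ := hpos (i + 1) (by omega) (by omega)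
        have h₂ := hneg i hai le_rfl
        push_cast at h₁
        omega
      · exact hascP i hri hib
  · rintro ⟨hsplit, hasc⟩
    refine ⟨⟨fun u hau hur => (hsplit u hau (hur.trans hrb)).2 hur,
      fun i hai hir => hasc i hai (by omega)⟩,
      fun u hru hub => ?_, fun i hri hib => hasc i (by omega) hib⟩
    have := (hsplit u (by omega) hub).not.2 (by omega)
    have := hne u hru
    omega

end Blocks

def runs {t : ℕ} (m : ℕ → ℕ) (r : Fin t → ℕ) : List (List ℤ) :=
  (List.range' 1 (m 1)).map (fun k => (k : ℤ)) ::
    (List.ofFn fun s : Fin t =>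
      [negRun (m ((s : ℕ) + 1)) (r s), posRun (r s) (m ((s : ℕ) + 2))]).flatten

section Runs

variable {t : ℕ} {m : ℕ → ℕ}

theorem forall_mem_runs_iff {r : Fin t → ℕ} {P : List ℤ → Prop} :
    (∀ l ∈ runs m r, P l) ↔
      P (posRun 0 (m 1)) ∧
        ∀ s : Fin t, P (negRun (m ((s : ℕ) + 1)) (r s)) ∧ P (posRun (r s) (m ((s : ℕ) + 2))) := by
  rw [runs, range'_one_map_natCast, List.forall_mem_cons]
  simp only [List.forall_mem_flatten, List.forall_mem_ofFn_iff, List.forall_mem_cons,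
    List.not_mem_nil, false_implies, implies_true, and_true]

theorem exists_mem_runs_iff {r : Fin t → ℕ} {P : List ℤ → Prop} :
    (∃ l ∈ runs m r, P l) ↔
      P (posRun 0 (m 1)) ∨
        ∃ s : Fin t, P (negRun (m ((s : ℕ) + 1)) (r s)) ∨ P (posRun (r s) (m ((s : ℕ) + 2))) := by
  simpa only [not_forall, not_not, not_and_or, exists_prop] using
    (forall_mem_runs_iff (m := m) (r := r) (P := fun l => ¬ P l)).not

theorem Nat.add_sum_range_tsub_eq {f : ℕ → ℕ} {t : ℕ} (hf : ∀ i < t, f i ≤ f (i + 1)) :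
    f 0 + ∑ i ∈ range t, (f (i + 1) - f i) = f t := by
  induction t with
  | zero => simp
  | succ t ih =>
    rw [sum_range_succ, ← add_assoc, ih fun i hi => hf i (by omega)]
    have := hf t (by omega)
    omega

theorem exists_fin_lt_and_le {u : ℕ} (h₁ : m 1 < u) (h₂ : u ≤ m (t + 1)) :
    ∃ s : Fin t, m ((s : ℕ) + 1) < u ∧ u ≤ m ((s : ℕ) + 2) := by
  classical
  have hex : ∃ k, u ≤ m (k + 1) := ⟨t, h₂⟩
  have hspec : u ≤ m (Nat.find hex + 1) := Nat.find_spec hex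
  have hmin : ∀ j < Nat.find hex, ¬ u ≤ m (j + 1) := fun j => Nat.find_min hex
  have hkt : Nat.find hex ≤ t := Nat.find_min' hex h₂
  obtain ⟨k, hk⟩ : ∃ k, Nat.find hex = k + 1 :=
    Nat.exists_eq_succ_of_ne_zero fun h => by rw [h, zero_add] at hspec; omega
  rw [hk] at hspec hkt hmin
  refine ⟨⟨k, by omega⟩, ?_, hspec⟩
  show m (k + 1) < u
  have := hmin k (by omega)
  omega

theorem exists_mem_runs (r : Fin t → ℕ) {u : ℕ} (hu₀ : 0 < u) (hu : u ≤ m (t + 1)) :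
    ∃ l ∈ runs m r, (u : ℤ) ∈ l ∨ -(u : ℤ) ∈ l := by
  rw [exists_mem_runs_iff]
  simp only [mem_negRun, mem_posRun]
  by_cases hu₁ : u ≤ m 1
  · exact Or.inl (Or.inl ⟨by omega, by omega⟩)
  obtain ⟨s, hs₁, hs₂⟩ := exists_fin_lt_and_le (by omega) hu
  refine Or.inr ⟨s, ?_⟩
  by_cases hur : u ≤ r s
  · exact Or.inl (Or.inr (by omega))
  · exact Or.inr (Or.inl (by omega))

theorem sum_length_runs {r : Fin t → ℕ}
    (hr : ∀ s : Fin t, m ((s : ℕ) + 1) ≤ r s ∧ r s ≤ m ((s : ℕ) + 2)) :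
    ((runs m r).map List.length).sum = m (t + 1) := by
  have hterm : ∀ s : Fin t,
      r s - m ((s : ℕ) + 1) + (m ((s : ℕ) + 2) - r s) = m ((s : ℕ) + 2) - m ((s : ℕ) + 1) :=
    fun s => by have := hr s; omega
  rw [runs, range'_one_map_natCast]
  simp only [List.map_cons, length_posRun, tsub_zero, List.map_flatten, List.map_ofFn,
    Function.comp_def, length_negRun, List.map_nil, List.sum_cons, List.sum_flatten, List.sum_nil,
    add_zero, hterm, List.sum_ofFn]
  rw [Fin.sum_univ_eq_sum_range (fun i => m (i + 1 + 1) - m (i + 1))]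
  exact Nat.add_sum_range_tsub_eq (f := fun i => m (i + 1)) fun i hi =>
    (hr ⟨i, hi⟩).1.trans (hr ⟨i, hi⟩).2

end Runs

section Shuffle

variable {n t : ℕ} {m : ℕ → ℕ} {σ : Equiv.Perm ℤ} {r : Fin t → ℕ}

theorem IsSigned.isShuffle_runs_iff_forall_sublist (hσ : IsSigned n σ) (hlast : m (t + 1) = n)
    (hr : ∀ s : Fin t, m ((s : ℕ) + 1) ≤ r s ∧ r s ≤ m ((s : ℕ) + 2)) :
    IsShuffle ((List.range n).map (bword n σ)) (runs m r) ↔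
      ∀ l ∈ runs m r, l.Sublist ((List.range n).map (bword n σ)) := by
  refine ⟨fun h => h.1, fun h => ⟨h, fun x => ⟨fun hx => ?_, ?_⟩, ?_⟩⟩
  · obtain ⟨habs, hpos⟩ := hσ.mem_map_bword_iff.1 hx
    have hx₀ : x ≠ 0 := by rintro rfl; simp [hσ.inv.map_zero] at hpos
    rw [Int.abs_eq_natAbs] at habs
    obtain ⟨l, hl, hxl⟩ := exists_mem_runs (m := m) r (u := x.natAbs) (by omega) (by omega)
    have hxl' : x ∈ l ∨ -x ∈ l := by
      rcases Int.natAbs_eq x with hx' | hx' <;> rw [hx'] <;> simpa [or_comm] using hxl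
    rcases hxl' with hxl' | hxl'
    · exact ⟨l, hl, hxl'⟩
    · exact absurd ((h l hl).subset hxl') (hσ.neg_notMem_map_bword hx)
  · rintro ⟨l, hl, hxl⟩
    exact (h l hl).subset hxl
  · rw [List.length_map, List.length_range, sum_length_runs hr, hlast]

theorem IsSigned.isShuffle_runs_iff (hσ : IsSigned n σ)
    (hm : MonotoneOn m (Set.Icc 1 (t + 1))) (hlast : m (t + 1) = n)
    (hr : ∀ s : Fin t, m ((s : ℕ) + 1) ≤ r s ∧ r s ≤ m ((s : ℕ) + 2)) :
    IsShuffle ((List.range n).map (bword n σ)) (runs m r) ↔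
      (∀ i < m 1, σ⁻¹ i < σ⁻¹ (i + 1)) ∧
        ∀ s : Fin t, SignSplit σ⁻¹ (m ((s : ℕ) + 1)) (m ((s : ℕ) + 2)) (r s) ∧
          ∀ i : ℕ, m ((s : ℕ) + 1) < i → i < m ((s : ℕ) + 2) → σ⁻¹ i < σ⁻¹ (i + 1) := by
  have hle : ∀ j, 1 ≤ j → j ≤ t + 1 → m j ≤ n := fun j hj₁ hj₂ =>
    hlast ▸ hm ⟨hj₁, hj₂⟩ ⟨by omega, le_rfl⟩ hj₂
  rw [hσ.isShuffle_runs_iff_forall_sublist hlast hr, forall_mem_runs_iff,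
    hσ.posRun_zero_sublist_iff (hle 1 le_rfl (by omega))]
  exact and_congr Iff.rfl (forall_congr' fun s =>
    hσ.negRun_sublist_and_posRun_sublist_iff (hr s).1 (hr s).2 (hle _ (by omega) (by omega)))

end Shuffle

theorem IsSigned.desB_subset_iff {n : ℕ} {σ : Equiv.Perm ℤ} (hσ : IsSigned n σ)
    {S : Finset ℕ} :
    DesB n σ ⊆ S ↔ ∀ i < n, i ∉ S → σ i < σ (i + 1) := by
  have hmem : ∀ i, i ∈ DesB n σ ↔ i < n ∧ σ (i + 1) < σ i := fun i => by
    rw [DesB, mem_filter, mem_range]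
    split_ifs with hi
    · simp [hi, hσ.map_zero]
    · rfl
  have hne : ∀ i : ℕ, σ i ≠ σ (i + 1) := fun i => σ.injective.ne (by omega)
  constructor
  · intro h i hin hiS
    by_contra hc
    exact hiS (h ((hmem i).2 ⟨hin, lt_of_le_of_ne (not_lt.1 hc) (hne i).symm⟩))
  · intro h i hi
    obtain ⟨hin, hlt⟩ := (hmem i).1 hi
    by_contra hiS
    exact absurd (h i hin hiS) (not_lt.2 hlt.le)

theorem forall_notMem_image_iff {n t : ℕ} {m : ℕ → ℕ}
    (hm : StrictMonoOn m (Set.Icc 1 (t + 1))) (hlast : m (t + 1) = n) {P : ℕ → Prop} :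
    (∀ i < n, i ∉ (Icc 1 t).image m → P i) ↔
      (∀ i < m 1, P i) ∧
        ∀ s : Fin t, ∀ i : ℕ, m ((s : ℕ) + 1) < i → i < m ((s : ℕ) + 2) → P i := by
  have hmem : ∀ {j}, j ∈ Icc 1 t → j ∈ Set.Icc 1 (t + 1) := fun hj => by
    rw [mem_Icc] at hj; exact ⟨hj.1, by omega⟩
  have hle : ∀ j, 1 ≤ j → j ≤ t + 1 → m j ≤ n := fun j hj₁ hj₂ =>
    hlast ▸ hm.monotoneOn ⟨hj₁, hj₂⟩ ⟨by omega, le_rfl⟩ hj₂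
  constructor
  · intro h
    refine ⟨fun i hi => h i (by have := hle 1 le_rfl (by omega); omega) ?_,
      fun s i hi₁ hi₂ => h i (by have := hle ((s : ℕ) + 2) (by omega) (by omega); omega) ?_⟩
    · rintro hi'
      obtain ⟨j, hj, rfl⟩ := mem_image.1 hi'
      have := (hm.lt_iff_lt (hmem hj) ⟨le_rfl, by omega⟩).1 hi
      rw [mem_Icc] at hj
      omega
    · rintro hi'
      obtain ⟨j, hj, rfl⟩ := mem_image.1 hi'
      have h₁ := (hm.lt_iff_lt ⟨by omega, by omega⟩ (hmem hj)).1 hi₁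
      have h₂ := (hm.lt_iff_lt (hmem hj) ⟨by omega, by omega⟩).1 hi₂
      omega
  · rintro ⟨h₀, hs⟩ i hin hiM
    by_cases hi : i < m 1
    · exact h₀ i hi
    obtain ⟨s, hs₁, hs₂⟩ :=
      exists_fin_lt_and_le (t := t) (m := m) (u := i + 1) (by omega) (by omega)
    have : m ((s : ℕ) + 1) ≠ i := fun he =>
      hiM (mem_image.2 ⟨(s : ℕ) + 1, mem_Icc.2 ⟨by omega, by omega⟩, he⟩)
    exact hs s i (by omega) (by omega)

theorem stmt9_general (n t : ℕ) (m : ℕ → ℕ) (hlast : m (t + 1) = n)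
    (hmono : ∀ s, 1 ≤ s → s ≤ t → m s < m (s + 1))
    (σ : Equiv.Perm ℤ) (h : IsSigned n σ) :
    DesB n σ⁻¹ ⊆ (Finset.Icc 1 t).image m ↔
      ∃! r : Fin t → ℕ,
        (∀ s : Fin t, m ((s : ℕ) + 1) ≤ r s ∧ r s ≤ m ((s : ℕ) + 2)) ∧
        IsShuffle ((List.range n).map (bword n σ))
          (((List.range' 1 (m 1)).map (fun k => (k : ℤ))) ::
            (List.ofFn fun s : Fin t =>
              [(List.range (r s - m ((s : ℕ) + 1))).map (fun k => -(r s : ℤ) + k),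
               (List.range (m ((s : ℕ) + 2) - r s)).map (fun k => (r s : ℤ) + 1 + k)]).flatten) := by
  have hm : StrictMonoOn m (Set.Icc 1 (t + 1)) :=
    strictMonoOn_of_lt_add_one Set.ordConnected_Icc fun s _ hs hs' =>
      hmono s hs.1 (by simp only [Set.mem_Icc] at hs'; omega)
  have hm' : ∀ s : Fin t, m ((s : ℕ) + 1) ≤ m ((s : ℕ) + 2) := fun s =>
    (hmono _ (by omega) (by omega)).le
  rw [h.inv.desB_subset_iff, forall_notMem_image_iff hm hlast]
  constructor
  · rintro ⟨h₀, hasc⟩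
    choose r hr hsplit using fun s => exists_signSplit (hm' s) (hasc s)
    refine ⟨r, ⟨hr, (h.isShuffle_runs_iff hm.monotoneOn hlast hr).2
      ⟨h₀, fun s => ⟨hsplit s, hasc s⟩⟩⟩, fun r' ⟨hr', hshuffle⟩ => funext fun s => ?_⟩
    have hblocks := (h.isShuffle_runs_iff hm.monotoneOn hlast hr').1 hshuffle
    exact (hblocks.2 s).1.eq (hsplit s) (hr' s) (hr s)
  · rintro ⟨r, ⟨hr, hshuffle⟩, -⟩
    have hblocks := (h.isShuffle_runs_iff hm.monotoneOn hlast hr).1 hshuffle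
    exact ⟨hblocks.1, fun s => (hblocks.2 s).2⟩

theorem stmt9 (n t : ℕ) (m : ℕ → ℕ) (h0 : m 0 = 0) (hlast : m (t + 1) = n)
    (hmono : ∀ s, 1 ≤ s → s ≤ t → m s < m (s + 1))
    (σ : Equiv.Perm ℤ) (h : IsSigned n σ) :
    DesB n σ⁻¹ ⊆ (Finset.Icc 1 t).image m ↔
      ∃! r : Fin t → ℕ,
        (∀ s : Fin t, m ((s : ℕ) + 1) ≤ r s ∧ r s ≤ m ((s : ℕ) + 2)) ∧
        IsShuffle ((List.range n).map (bword n σ))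
          (((List.range' 1 (m 1)).map (fun k => (k : ℤ))) ::
            (List.ofFn fun s : Fin t =>
              [(List.range (r s - m ((s : ℕ) + 1))).map (fun k => -(r s : ℤ) + k),
               (List.range (m ((s : ℕ) + 2) - r s)).map (fun k => (r s : ℤ) + 1 + k)]).flatten) :=
  stmt9_general n t m hlast hmono σ h

end Statements
end

section
/- The q-binomial theorem: ∏_{i=1}^n (1 + q^i x) = ∑_{k=0}^n [n choose k]_q · q^{binom(k+1,2)} · x^k. -/
open Finset

noncomputable section Statements

open Finset RatFunc

local notation "𝕢" => (RatFunc.X : RatFunc ℚ)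

/-! Induct on `n`. Multiplying by `1 + q^(n+1) x` and collecting the coefficient of `x^(k+1)`
reduces the step to the `q`-Pascal rule `[n+1, k+1] = [n, k+1] + q^(n-k) [n, k]`, which in turn
is the splitting `[n+1]_q = [n-k]_q + q^(n-k) [k+1]_q` of a `q`-integer. All this only needs
`[m]_q ≠ 0` for `m ≥ 1`, which holds as soon as `q` is not a root of unity. -/

section GaussianBinomial

variable {F : Type} [Field F]

/-- Only meaningful for `k ≤ n`: for `k > n` the truncated `n - k` gives a nonzero junk value. -/
def qBinom (q : F) (n k : ℕ) : F := qFact q n / (qFact q k * qFact q (n - k))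

lemma qInt_add (q : F) (a b : ℕ) : qInt q (a + b) = qInt q a + q ^ a * qInt q b := by
  simp only [qInt, sum_range_add, pow_add, mul_sum]

lemma qInt_ne_zero {q : F} {m : ℕ} (h : q ^ m ≠ 1) : qInt q m ≠ 0 := by
  intro h0
  apply h
  rw [← sub_eq_zero, ← geom_sum_mul, ← qInt, h0, zero_mul]

lemma qInt_map {K : Type} [Field K] (f : F →+* K) (q : F) (m : ℕ) :
    qInt (f q) m = f (qInt q m) := by
  simp only [qInt, map_sum, map_pow]

lemma qFact_succ (q : F) (n : ℕ) : qFact q (n + 1) = qFact q n * qInt q (n + 1) :=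
  prod_range_succ _ _

lemma qFact_zero (q : F) : qFact q 0 = 1 := prod_range_zero _

variable {q : F}

lemma qFact_ne_zero (hq : ∀ m : ℕ, qInt q (m + 1) ≠ 0) (n : ℕ) : qFact q n ≠ 0 :=
  prod_ne_zero_iff.mpr fun i _ => hq i

lemma qBinom_zero_right (hq : ∀ m : ℕ, qInt q (m + 1) ≠ 0) (n : ℕ) : qBinom q n 0 = 1 := by
  rw [qBinom, Nat.sub_zero, qFact_zero, one_mul, div_self (qFact_ne_zero hq n)]

lemma qBinom_self (hq : ∀ m : ℕ, qInt q (m + 1) ≠ 0) (n : ℕ) : qBinom q n n = 1 := by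
  rw [qBinom, Nat.sub_self, qFact_zero, mul_one, div_self (qFact_ne_zero hq n)]

lemma qBinom_succ_succ (hq : ∀ m : ℕ, qInt q (m + 1) ≠ 0) {n k : ℕ} (hk : k < n) :
    qBinom q (n + 1) (k + 1) = qBinom q n (k + 1) + q ^ (n - k) * qBinom q n k := by
  obtain ⟨b, rfl⟩ : ∃ b, n = k + b + 1 := ⟨n - k - 1, by omega⟩
  have hsplit : qInt q (k + b + 2) = qInt q (b + 1) + q ^ (b + 1) * qInt q (k + 1) := by
    rw [← qInt_add]; congr 1; omega
  have hqk := hq k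
  have hqb := hq b
  have hFk := qFact_ne_zero hq k
  have hFb := qFact_ne_zero hq b
  simp only [qBinom, show k + b + 1 + 1 - (k + 1) = b + 1 by omega,
    show k + b + 1 - (k + 1) = b by omega, show k + b + 1 - k = b + 1 by omega]
  rw [qFact_succ q (k + b + 1), hsplit, qFact_succ q k, qFact_succ q b]
  field_simp

theorem qBinom_theorem (hq : ∀ m : ℕ, qInt q (m + 1) ≠ 0) (x : F) (n : ℕ) :
    ∏ i ∈ Icc 1 n, (1 + q ^ i * x) =
      ∑ k ∈ range (n + 1), qBinom q n k * q ^ Nat.choose (k + 1) 2 * x ^ k := by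
  induction n with
  | zero => simp [qBinom_zero_right hq]
  | succ n ih =>
    set T : ℕ → ℕ → F := fun m k => qBinom q m k * q ^ Nat.choose (k + 1) 2 * x ^ k
    have hT0 : ∀ m, T m 0 = 1 := fun m => by simp [T, qBinom_zero_right hq]
    -- `q^(n+1) = q^(n-k) q^(k+1)` and `C(k+2, 2) = C(k+1, 2) + (k+1)`
    have hshift : ∀ k ≤ n, T n k * (q ^ (n + 1) * x) =
        q ^ (n - k) * qBinom q n k * q ^ Nat.choose (k + 2) 2 * x ^ (k + 1) := fun k hk => by
      obtain ⟨d, rfl⟩ := Nat.exists_eq_add_of_le hk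
      simp only [T, Nat.choose_succ_succ' (k + 1), Nat.choose_one_right, Nat.add_sub_cancel_left]
      ring
    have htop : T (n + 1) (n + 1) = T n n * (q ^ (n + 1) * x) := by
      rw [hshift n le_rfl]; simp [T, qBinom_self hq]
    have hmid : ∀ k ∈ range n, T (n + 1) (k + 1) = T n (k + 1) + T n k * (q ^ (n + 1) * x) :=
      fun k hk => by
        rw [hshift k (mem_range.mp hk).le]
        simp only [T, qBinom_succ_succ hq (mem_range.mp hk)]
        ring
    rw [prod_Icc_succ_top (by omega), ih, mul_add, mul_one, sum_mul,
      sum_range_succ' (T n), sum_range_succ (fun k => T n k * _),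
      sum_range_succ' (T (n + 1)), sum_range_succ (fun k => T (n + 1) (k + 1)),
      sum_congr rfl hmid, sum_add_distrib, hT0, hT0, htop]
    ring

end GaussianBinomial

lemma RatFunc.X_pow_succ_ne_one {K : Type} [Field K] (m : ℕ) :
    (RatFunc.X : RatFunc K) ^ (m + 1) ≠ 1 := by
  rw [← RatFunc.algebraMap_X, ← map_pow, Ne, ← map_one (algebraMap (Polynomial K) (RatFunc K)),
    (RatFunc.algebraMap_injective K).eq_iff]
  intro h
  simpa using congrArg Polynomial.natDegree h

/-- q-binomial theorem. -/
theorem stmt19 (n : ℕ) :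
    (∏ i ∈ Finset.Icc 1 n,
        (1 + (RatFunc.C 𝕢 : RatFunc (RatFunc ℚ)) ^ i * RatFunc.X)) =
      ∑ k ∈ Finset.range (n + 1),
        qFact (RatFunc.C 𝕢 : RatFunc (RatFunc ℚ)) n /
            (qFact (RatFunc.C 𝕢) k * qFact (RatFunc.C 𝕢) (n - k))
          * (RatFunc.C 𝕢) ^ Nat.choose (k + 1) 2 * RatFunc.X ^ k := by
  refine qBinom_theorem (fun m => ?_) _ n
  rw [qInt_map]
  exact (map_ne_zero _).mpr (qInt_ne_zero (RatFunc.X_pow_succ_ne_one m))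

end Statements
end
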